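/- arXiv:2208.12040 — 2 statements merged into one kernel-verified Lean document; each statement's English description precedes it below -/
import Mathlib

section
/- Derivative estimate for the difference of group velocities: for every integer n ≥ 0 there is a constant C_n such that for all ξ, η ∈ ℝ³ with |η| ≤ |ξ|/2 and every multi-index γ in ξ with |γ| = n, | ∂_ξ^γ ( ξ/⟨ξ⟩ − (ξ−η)/⟨ξ−η⟩ ) | ≤ C_n |η| / ⟨ξ⟩^{n+1}. -/
noncomputable section

open MeasureTheory Complex
open scoped ENNReal NNReal


open MeasureTheory Complex
open scoped ENNReal

abbrev E3 : Type := EuclideanSpace ℝ (Fin 3)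
abbrev C4 : Type := EuclideanSpace ℂ (Fin 4)

/-- Japanese bracket `⟨ξ⟩ = (1+|ξ|²)^{1/2}` on `ℝ³`. -/
def jap (ξ : E3) : ℝ := Real.sqrt (1 + ‖ξ‖ ^ 2)

/-- `⟨t⟩ = (1+t²)^{1/2}` for a real number. -/
def japR (t : ℝ) : ℝ := Real.sqrt (1 + t ^ 2)

/-- The Fourier transform `f̂(ξ) = ∫ e^{-i x·ξ} f(x) dx`. -/
def FT {E : Type} [NormedAddCommGroup E] [NormedSpace ℂ E] (f : E3 → E) (ξ : E3) : E :=
  ∫ x : E3, Complex.exp (-(Complex.I * ((inner ℝ x ξ : ℝ) : ℂ))) • f x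

/-- The inverse Fourier transform `(2π)^{-3} ∫ e^{i x·ξ} g(ξ) dξ`. -/
def IFT {E : Type} [NormedAddCommGroup E] [NormedSpace ℂ E] (g : E3 → E) (x : E3) : E :=
  ((((2 * Real.pi) ^ 3 : ℝ) : ℂ))⁻¹ • ∫ ξ : E3, Complex.exp (Complex.I * ((inner ℝ ξ x : ℝ) : ℂ)) • g ξ

/-- The Dirac matrices `α^j`. -/
def diracAlpha : Fin 3 → Matrix (Fin 4) (Fin 4) ℂ
  | 0 => !![0,0,0,1; 0,0,1,0; 0,1,0,0; 1,0,0,0]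
  | 1 => !![0,0,0,-Complex.I; 0,0,Complex.I,0; 0,-Complex.I,0,0; Complex.I,0,0,0]
  | 2 => !![0,0,1,0; 0,0,0,-1; 1,0,0,0; 0,-1,0,0]

/-- The Dirac matrix `β = diag(I₂, -I₂)`. -/
def diracBeta : Matrix (Fin 4) (Fin 4) ℂ := !![1,0,0,0; 0,1,0,0; 0,0,-1,0; 0,0,0,-1]

/-- The symbol `∑ α^j ξ_j + β`. -/
def diracSymbol (ξ : E3) : Matrix (Fin 4) (Fin 4) ℂ :=
  (∑ j : Fin 3, (ξ j : ℂ) • diracAlpha j) + diracBeta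

/-- The Dirac projection symbols `Π_θ(ξ) = ½(I₄ + θ(∑ α^j ξ_j + β)/⟨ξ⟩)`, `θ = ±1`. -/
def diracProj (θ : ℝ) (ξ : E3) : Matrix (Fin 4) (Fin 4) ℂ :=
  (1/2 : ℂ) • ((1 : Matrix (Fin 4) (Fin 4) ℂ) + ((θ / jap ξ : ℝ) : ℂ) • diracSymbol ξ)

/-- Action of a 4×4 matrix on a vector of `ℂ⁴`. -/
def Mv (M : Matrix (Fin 4) (Fin 4) ℂ) (v : C4) : C4 :=
  (EuclideanSpace.equiv (Fin 4) ℂ).symm (M.mulVec (EuclideanSpace.equiv (Fin 4) ℂ v))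

/-- A 4×4 complex matrix viewed as an element of a Euclidean space (Frobenius norm). -/
def matE (M : Matrix (Fin 4) (Fin 4) ℂ) : EuclideanSpace ℂ (Fin 4 × Fin 4) :=
  (EuclideanSpace.equiv (Fin 4 × Fin 4) ℂ).symm fun p => M p.1 p.2

/-- Fourier multiplier with 4×4-matrix-valued symbol. -/
def FMul (m : E3 → Matrix (Fin 4) (Fin 4) ℂ) (f : E3 → C4) : E3 → C4 :=
  IFT fun ξ => Mv (m ξ) (FT f ξ)

/-- The Dirac projection `Π_θ(D)`. -/
def PiD (θ : ℝ) (f : E3 → C4) : E3 → C4 := FMul (diracProj θ) f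

/-- The half-wave propagator `e^{θ i t ⟨D⟩}`. -/
def halfWave (θ t : ℝ) (f : E3 → C4) : E3 → C4 :=
  IFT fun ξ => Complex.exp (Complex.I * ((θ * t * jap ξ : ℝ) : ℂ)) • FT f ξ

/-- The Sobolev `H^s` norm `‖⟨ξ⟩^s f̂‖_{L²}`. -/
def HsNorm (s : ℝ) (f : E3 → C4) : ℝ≥0∞ :=
  eLpNorm (fun ξ => (jap ξ ^ s) • FT f ξ) 2 volume

/-- The `W^{2,∞}` norm. -/
def W2InfNorm (f : E3 → C4) : ℝ≥0∞ :=
  ∑ n ∈ Finset.range 3, eLpNorm (iteratedFDeriv ℝ n f) ⊤ volume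

/-- The pointwise ℂ⁴ inner product `⟨ψ₁, ψ₂⟩ = ψ₁†ψ₂`. -/
def pair (ψ₁ ψ₂ : E3 → C4) : E3 → ℂ := fun x => (inner ℂ (ψ₁ x) (ψ₂ x) : ℂ)

/-- The Hartree nonlinearity `N(ψ₁,ψ₂,ψ₃) = (|x|⁻¹ * ⟨ψ₃,ψ₂⟩) ψ₁`. -/
def hartreeN (ψ₁ ψ₂ ψ₃ : E3 → C4) (x : E3) : C4 :=
  (∫ y : E3, ((‖x - y‖⁻¹ : ℝ) : ℂ) * (inner ℂ (ψ₃ y) (ψ₂ y) : ℂ)) • ψ₁ x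

/-- `ψ` solves the Dirac–Hartree equation (DE) on the time set `I`. -/
def IsSolutionDE (c₁ : ℝ) (ψ : ℝ → E3 → C4) (I : Set ℝ) : Prop :=
  ∀ t ∈ I, ∀ x : E3,
    deriv (fun s => ψ s x) t
      + ∑ j : Fin 3, Mv (diracAlpha j) (fderiv ℝ (ψ t) x (EuclideanSpace.single j (1:ℝ)))
      + Complex.I • Mv diracBeta (ψ t x)
      = (Complex.I * (c₁ : ℂ) * ((∫ y : E3, ‖x - y‖⁻¹ * ‖ψ t y‖ ^ 2 : ℝ) : ℂ)) • ψ t x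

/-- A smooth bump supported in `B(0,2)`, equal to `1` on `B(0,1)`. -/
def IsBump (ρ : E3 → ℝ) : Prop :=
  ContDiff ℝ (⊤ : ℕ∞) ρ ∧ (∀ ξ : E3, 2 ≤ ‖ξ‖ → ρ ξ = 0) ∧ (∀ ξ : E3, ‖ξ‖ ≤ 1 → ρ ξ = 1)

/-- A dyadic number `N ∈ 2^ℤ`. -/
def IsDyadic (N : ℝ) : Prop := ∃ k : ℤ, N = 2 ^ k

/-- `ρ_N(ξ) = ρ(ξ/N) - ρ(2ξ/N)`. -/
def rhoN (ρ : E3 → ℝ) (N : ℝ) (ξ : E3) : ℝ := ρ (N⁻¹ • ξ) - ρ ((2 * N⁻¹) • ξ)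

/-- The Littlewood–Paley projection `P_N`. -/
def PN {E : Type} [NormedAddCommGroup E] [NormedSpace ℂ E] (ρ : E3 → ℝ) (N : ℝ)
    (f : E3 → E) : E3 → E :=
  IFT fun ξ => ((rhoN ρ N ξ : ℝ) : ℂ) • FT f ξ

/-- The norm `‖·‖_{Σ_T^θ}` (`θ = ±1`). -/
def SigmaThNorm (δ₀ k T θ : ℝ) (φ : ℝ → E3 → C4) : ℝ≥0∞ :=
  ⨆ t ∈ Set.Icc (0:ℝ) T,
    (ENNReal.ofReal (japR t ^ (-δ₀)) * HsNorm k (φ t)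
      + ENNReal.ofReal (japR t ^ (-δ₀)) *
          HsNorm 2 (fun x => jap x • halfWave θ t (φ t) x)
      + ENNReal.ofReal (japR t ^ (-(2*δ₀))) *
          HsNorm 2 (fun x => ((1 + ‖x‖ ^ 2 : ℝ)) • halfWave θ t (φ t) x)
      + eLpNorm (fun ξ => (jap ξ ^ (10:ℝ)) • FT (φ t) ξ) ⊤ volume)

/-- The norm `‖ψ‖_{Σ_T} = ‖Π₊(D)ψ‖_{Σ_T^+} + ‖Π₋(D)ψ‖_{Σ_T^-}`. -/
def SigmaNorm (δ₀ k T : ℝ) (ψ : ℝ → E3 → C4) : ℝ≥0∞ :=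
  SigmaThNorm δ₀ k T 1 (fun t => PiD 1 (ψ t))
    + SigmaThNorm δ₀ k T (-1) (fun t => PiD (-1) (ψ t))

/-- The weighted data norm from the smallness condition. -/
def DataNorm (k : ℝ) (ψ₀ : E3 → C4) : ℝ≥0∞ :=
  (HsNorm k (PiD 1 ψ₀)
      + HsNorm 2 (fun x => ((1 + ‖x‖ ^ 2 : ℝ)) • PiD 1 ψ₀ x)
      + eLpNorm (fun ξ => (jap ξ ^ (10:ℝ)) • FT (PiD 1 ψ₀) ξ) ⊤ volume)
  + (HsNorm k (PiD (-1) ψ₀)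
      + HsNorm 2 (fun x => ((1 + ‖x‖ ^ 2 : ℝ)) • PiD (-1) ψ₀ x)
      + eLpNorm (fun ξ => (jap ξ ^ (10:ℝ)) • FT (PiD (-1) ψ₀) ξ) ⊤ volume)


section VelocityAux


def BIL : E3 →L[ℝ] (E3 →L[ℝ] ℝ) := innerSL ℝ

lemma one_le_jap (ζ : E3) : 1 ≤ jap ζ := by
  have := Real.sqrt_le_sqrt (show (1:ℝ) ≤ 1 + ‖ζ‖^2 from le_add_of_nonneg_right (sq_nonneg _))
  simpa [jap] using this

lemma jap_pos (ζ : E3) : 0 < jap ζ := lt_of_lt_of_le one_pos (one_le_jap ζ)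

lemma norm_le_jap (ζ : E3) : ‖ζ‖ ≤ jap ζ := by
  calc ‖ζ‖ = Real.sqrt (‖ζ‖^2) := by rw [Real.sqrt_sq (norm_nonneg _)]
  _ ≤ jap ζ := Real.sqrt_le_sqrt (by linarith)

lemma contDiff_jap : ContDiff ℝ ((⊤:ℕ∞) : WithTop ℕ∞) jap :=
  (contDiff_const.add (contDiff_norm_sq ℝ)).sqrt (fun ζ => by positivity)

def uu (ζ : E3) : ℝ := (jap ζ)⁻¹

lemma contDiff_uu : ContDiff ℝ ((⊤:ℕ∞) : WithTop ℕ∞) uu := contDiff_jap.inv fun ζ => (jap_pos ζ).ne'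

lemma natCast_le_infty (m : ℕ) : (m : WithTop ℕ∞) ≤ ((⊤:ℕ∞) : WithTop ℕ∞) := by
  exact_mod_cast (le_top : (m:ℕ∞) ≤ ⊤)

lemma natCast_lt_infty (m : ℕ) : (m : WithTop ℕ∞) < ((⊤:ℕ∞) : WithTop ℕ∞) := by
  exact_mod_cast (by simp : (m:ℕ∞) < ⊤)

lemma hasFDerivAt_uu (ζ : E3) :
    HasFDerivAt uu ((-(uu ζ • uu ζ • uu ζ) : ℝ) • (BIL ζ)) ζ := by
  have h1 : HasFDerivAt (fun x : E3 => 1 + ‖x‖^2) ((0 : E3 →L[ℝ] ℝ) + 2 • (innerSL ℝ ζ)) ζ :=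
    (hasFDerivAt_const 1 ζ).add (hasStrictFDerivAt_norm_sq ζ).hasFDerivAt
  have hsq := h1.sqrt (by positivity)
  have hne : Real.sqrt (1 + ‖ζ‖^2) ≠ 0 := (jap_pos ζ).ne'
  have h2 := (hasDerivAt_inv hne).comp_hasFDerivAt ζ hsq
  have hEq : ((-(uu ζ • uu ζ • uu ζ) : ℝ)) • (BIL ζ)
      = -(Real.sqrt (1 + ‖ζ‖^2) ^ 2)⁻¹ • ((1 / (2 * Real.sqrt (1 + ‖ζ‖^2))) • ((0 : E3 →L[ℝ] ℝ) + 2 • (innerSL ℝ ζ))) := by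
    ext y
    have hj : Real.sqrt (1 + ‖ζ‖ ^ 2) = jap ζ := rfl
    have hpos := jap_pos ζ
    simp only [ContinuousLinearMap.smul_apply, ContinuousLinearMap.add_apply,
      ContinuousLinearMap.zero_apply, zero_add, BIL, uu, hj, smul_eq_mul,
      ContinuousLinearMap.coe_smul', Pi.smul_apply]
    simp only [nsmul_eq_mul, Nat.cast_ofNat]
    have hin : (innerSL ℝ ζ) y = (inner ℝ ζ y : ℝ) := innerSL_apply_apply ℝ ζ y
    field_simp
  rw [hEq]
  exact h2

lemma fderiv_uu : fderiv ℝ uu = fun ζ => (-(uu ζ • uu ζ • uu ζ) : ℝ) • (BIL ζ) :=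
  funext fun ζ => (hasFDerivAt_uu ζ).fderiv

lemma jap_zpow_pos (ζ : E3) (z : ℤ) : (0:ℝ) < jap ζ ^ z := zpow_pos (jap_pos ζ) z

lemma clm_bound {F : Type*} [NormedAddCommGroup F] [NormedSpace ℝ F]
    (A : E3 →L[ℝ] F) (hA : ‖A‖ ≤ 1) (k : ℕ) (ζ : E3) :
    ‖iteratedFDeriv ℝ k (⇑A) ζ‖ ≤ 1 * jap ζ ^ (1 - (k:ℤ)) := by
  rw [one_mul]
  match k with
  | 0 =>
    rw [norm_iteratedFDeriv_zero]
    calc ‖A ζ‖ ≤ ‖A‖ * ‖ζ‖ := A.le_opNorm ζ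
      _ ≤ 1 * jap ζ := mul_le_mul hA (norm_le_jap ζ) (norm_nonneg _) zero_le_one
      _ = jap ζ ^ (1 - ((0:ℕ):ℤ)) := by simp
  | (k+1) =>
    rw [← norm_iteratedFDeriv_fderiv]
    have hfd : fderiv ℝ (⇑A) = fun _ : E3 => A := funext fun x => A.fderiv
    rw [hfd]
    match k with
    | 0 =>
      rw [norm_iteratedFDeriv_zero]
      have : jap ζ ^ (1 - ((0+1:ℕ):ℤ)) = 1 := by norm_num
      rw [this]; exact hA
    | (k+1) =>
      rw [iteratedFDeriv_const_of_ne (Nat.succ_ne_zero k)]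
      simp only [Pi.zero_apply, norm_zero]
      exact le_of_lt (jap_zpow_pos ζ _)

lemma smul_bound {F : Type*} [NormedAddCommGroup F] [NormedSpace ℝ F]
    {s : E3 → ℝ} {V : E3 → F} (hs : ContDiff ℝ ((⊤:ℕ∞) : WithTop ℕ∞) s) (hV : ContDiff ℝ ((⊤:ℕ∞) : WithTop ℕ∞) V)
    {n : ℕ} {a b : ℤ} {C D : ℝ} (hC : 0 ≤ C) (hD : 0 ≤ D)
    (HsB : ∀ i ≤ n, ∀ ζ, ‖iteratedFDeriv ℝ i s ζ‖ ≤ C * jap ζ ^ (a - (i:ℤ)))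
    (HVB : ∀ i ≤ n, ∀ ζ, ‖iteratedFDeriv ℝ i V ζ‖ ≤ D * jap ζ ^ (b - (i:ℤ))) :
    ∀ i ≤ n, ∀ ζ, ‖iteratedFDeriv ℝ i (fun x => s x • V x) ζ‖
      ≤ 2^n * C * D * jap ζ ^ (a + b - (i:ℤ)) := by
  intro i hi ζ
  refine (norm_iteratedFDeriv_smul_le hs hV ζ (natCast_le_infty i)).trans ?_
  have key : ∀ j ∈ Finset.range (i+1),
      (i.choose j : ℝ) * ‖iteratedFDeriv ℝ j s ζ‖ * ‖iteratedFDeriv ℝ (i-j) V ζ‖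
        ≤ (i.choose j : ℝ) * (C * D * jap ζ ^ (a + b - (i:ℤ))) := by
    intro j hj
    have hj' : j ≤ i := Nat.lt_succ_iff.mp (Finset.mem_range.mp hj)
    have h1 := HsB j (hj'.trans hi) ζ
    have h2 := HVB (i-j) ((Nat.sub_le i j).trans hi) ζ
    have hmul : ‖iteratedFDeriv ℝ j s ζ‖ * ‖iteratedFDeriv ℝ (i-j) V ζ‖
        ≤ (C * jap ζ ^ (a - (j:ℤ))) * (D * jap ζ ^ (b - ((i-j:ℕ):ℤ))) :=
      mul_le_mul h1 h2 (norm_nonneg _)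
        (mul_nonneg hC (le_of_lt (jap_zpow_pos ζ _)))
    have heq : (C * jap ζ ^ (a - (j:ℤ))) * (D * jap ζ ^ (b - ((i-j:ℕ):ℤ)))
        = C * D * jap ζ ^ (a + b - (i:ℤ)) := by
      rw [mul_mul_mul_comm, ← zpow_add₀ (jap_pos ζ).ne']
      congr 1
      have hcast : ((i-j:ℕ):ℤ) = (i:ℤ) - (j:ℤ) := by
        push_cast [Nat.cast_sub hj']; ring
      rw [hcast]; ring
    calc (i.choose j : ℝ) * ‖iteratedFDeriv ℝ j s ζ‖ * ‖iteratedFDeriv ℝ (i-j) V ζ‖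
        = (i.choose j : ℝ) * (‖iteratedFDeriv ℝ j s ζ‖ * ‖iteratedFDeriv ℝ (i-j) V ζ‖) := by
          ring
      _ ≤ (i.choose j : ℝ) * ((C * jap ζ ^ (a - (j:ℤ))) * (D * jap ζ ^ (b - ((i-j:ℕ):ℤ)))) :=
          mul_le_mul_of_nonneg_left hmul (by positivity)
      _ = (i.choose j : ℝ) * (C * D * jap ζ ^ (a + b - (i:ℤ))) := by rw [heq]
  refine (Finset.sum_le_sum key).trans ?_
  rw [← Finset.sum_mul,
    show ∑ j ∈ Finset.range (i+1), (i.choose j:ℝ) = 2^i by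
      exact_mod_cast Nat.sum_range_choose i]
  have h2i : (2:ℝ)^i ≤ 2^n := by
    apply pow_le_pow_right₀ (by norm_num) hi
  have hK : (0:ℝ) ≤ C * D * jap ζ ^ (a + b - (i:ℤ)) :=
    mul_nonneg (mul_nonneg hC hD) (le_of_lt (jap_zpow_pos ζ _))
  calc (2:ℝ)^i * (C * D * jap ζ ^ (a + b - (i:ℤ)))
      ≤ 2^n * (C * D * jap ζ ^ (a + b - (i:ℤ))) := mul_le_mul_of_nonneg_right h2i hK
    _ = 2^n * C * D * jap ζ ^ (a + b - (i:ℤ)) := by ring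

lemma uu_bound : ∀ n : ℕ, ∃ C : ℝ, 0 < C ∧ ∀ i ≤ n, ∀ ζ : E3,
    ‖iteratedFDeriv ℝ i uu ζ‖ ≤ C * jap ζ ^ (-1 - (i:ℤ)) := by
  intro n
  induction n with
  | zero =>
    refine ⟨1, one_pos, ?_⟩
    intro i hi ζ
    interval_cases i
    rw [norm_iteratedFDeriv_zero]
    have huu : ‖uu ζ‖ = jap ζ ^ (-1:ℤ) := by
      rw [show uu ζ = (jap ζ)⁻¹ from rfl, Real.norm_eq_abs,
        _root_.abs_of_nonneg (le_of_lt (inv_pos.mpr (jap_pos ζ))), ← zpow_neg_one]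
    rw [huu]
    norm_num
  | succ m IH =>
    obtain ⟨C, hC, hB⟩ := IH
    have h2 := smul_bound contDiff_uu contDiff_uu (le_of_lt hC) (le_of_lt hC) hB hB
    have h3 := smul_bound contDiff_uu (contDiff_uu.smul contDiff_uu) (le_of_lt hC)
      (by positivity : (0:ℝ) ≤ 2^m*C*C) hB h2
    have h3' : ∀ i ≤ m, ∀ ζ : E3,
        ‖iteratedFDeriv ℝ i (fun x => (-(uu x • uu x • uu x) : ℝ)) ζ‖
          ≤ (2^m*C*(2^m*C*C)) * jap ζ ^ ((-3:ℤ) - (i:ℤ)) := by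
      intro i hi ζ
      have hfun : (fun x => (-(uu x • uu x • uu x) : ℝ)) = -(fun x => uu x • (uu x • uu x)) := by
        funext x; simp only [Pi.neg_apply, smul_eq_mul]
      rw [hfun, iteratedFDeriv_neg_apply, norm_neg]
      have h := h3 i hi ζ
      have hexp : (-1 + (-1 + -1) - (i:ℤ)) = (-3:ℤ) - (i:ℤ) := by ring
      rwa [hexp] at h
    have h4 : ∀ i ≤ m, ∀ ζ : E3, ‖iteratedFDeriv ℝ i (⇑BIL) ζ‖ ≤ 1 * jap ζ ^ (1 - (i:ℤ)) :=
      fun i _ ζ => clm_bound BIL (norm_innerSL_le ℝ) i ζ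
    have h5 := smul_bound (contDiff_uu.smul (contDiff_uu.smul contDiff_uu)).neg
      BIL.contDiff (by positivity : (0:ℝ) ≤ 2^m*C*(2^m*C*C)) zero_le_one h3' h4
    -- h5 : ∀ i ≤ m, ∀ ζ, ‖D^i (fun x => (-(uu x * uu x * uu x)) • BIL x)‖
    --        ≤ 2^m * (2^m*C*(2^m*C*C)) * 1 * jap ^ (-3 + 1 - i)
    refine ⟨C + 2^m * (2^m*C*(2^m*C*C)) * 1, by positivity, ?_⟩
    intro i hi ζ
    rcases Nat.eq_or_lt_of_le hi with rfl | h
    · -- i = m+1 case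
      rw [← norm_iteratedFDeriv_fderiv, fderiv_uu]
      have h := h5 m le_rfl ζ
      have hexp : ((-3:ℤ) + 1 - (m:ℤ)) = -1 - ((m+1:ℕ):ℤ) := by push_cast; ring
      rw [hexp] at h
      refine h.trans ?_
      have hX : (0:ℝ) < jap ζ ^ ((-1:ℤ) - ((m+1:ℕ):ℤ)) := jap_zpow_pos ζ _
      have hCX : (0:ℝ) ≤ C * jap ζ ^ ((-1:ℤ) - ((m+1:ℕ):ℤ)) := mul_nonneg hC.le hX.le
      nlinarith [hCX]
    · have hb := hB i (Nat.lt_succ_iff.mp h) ζ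
      refine hb.trans ?_
      have hX : (0:ℝ) < jap ζ ^ ((-1:ℤ) - (i:ℤ)) := jap_zpow_pos ζ _
      have hKX : (0:ℝ) ≤ (2^m*(2^m*C*(2^m*C*C))*1) * jap ζ ^ ((-1:ℤ) - (i:ℤ)) :=
        mul_nonneg (by positivity) hX.le
      nlinarith [hKX]

def gg : E3 → E3 := fun ζ => uu ζ • ζ

lemma contDiff_gg : ContDiff ℝ ((⊤:ℕ∞) : WithTop ℕ∞) gg := contDiff_uu.smul contDiff_id

lemma gg_bound (n : ℕ) : ∃ C : ℝ, 0 < C ∧ ∀ ζ : E3,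
    ‖iteratedFDeriv ℝ n gg ζ‖ ≤ C * jap ζ ^ (-(n:ℤ)) := by
  obtain ⟨C, hC, hB⟩ := uu_bound n
  have hid : ∀ i ≤ n, ∀ ζ : E3,
      ‖iteratedFDeriv ℝ i (⇑(ContinuousLinearMap.id ℝ E3)) ζ‖ ≤ 1 * jap ζ ^ (1 - (i:ℤ)) :=
    fun i _ ζ => clm_bound _ ContinuousLinearMap.norm_id_le i ζ
  have h := smul_bound contDiff_uu (ContinuousLinearMap.id ℝ E3).contDiff hC.le zero_le_one
    hB hid n le_rfl
  refine ⟨2^n * C * 1, by positivity, fun ζ => ?_⟩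
  have hfun : (fun x => uu x • (ContinuousLinearMap.id ℝ E3) x) = gg := rfl
  have hexp : ((-1:ℤ) + 1 - (n:ℤ)) = -(n:ℤ) := by ring
  rw [hfun, hexp] at h
  exact h ζ

lemma iter_translate {F : Type*} [NormedAddCommGroup F] [NormedSpace ℝ F]
    (g : E3 → F) (hg : ContDiff ℝ ((⊤:ℕ∞) : WithTop ℕ∞) g) (η : E3) :
    ∀ (n : ℕ) (ξ : E3),
      iteratedFDeriv ℝ n (fun x => g (x - η)) ξ = iteratedFDeriv ℝ n g (ξ - η) := by
  intro n
  induction n with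
  | zero => intro ξ; ext m; simp
  | succ m IH =>
    intro ξ
    rw [iteratedFDeriv_succ_eq_comp_left, iteratedFDeriv_succ_eq_comp_left]
    simp only [Function.comp_apply]
    congr 1
    have hfun : iteratedFDeriv ℝ m (fun x => g (x - η))
        = fun x => iteratedFDeriv ℝ m g (x - η) := funext IH
    rw [hfun]
    have hd : DifferentiableAt ℝ (iteratedFDeriv ℝ m g) (ξ - η) :=
      (hg.differentiable_iteratedFDeriv (natCast_lt_infty m)) _
    have hcomp := hd.hasFDerivAt.comp ξ (hasFDerivAt_sub_const η)
    have : (iteratedFDeriv ℝ m g ∘ fun x => x - η) = fun x => iteratedFDeriv ℝ m g (x - η) := rfl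
    rw [this] at hcomp
    rw [hcomp.fderiv, ContinuousLinearMap.comp_id]

lemma iter_sub_apply {F : Type*} [NormedAddCommGroup F] [NormedSpace ℝ F]
    {f g : E3 → F} (hf : ContDiff ℝ ((⊤:ℕ∞) : WithTop ℕ∞) f) (hg : ContDiff ℝ ((⊤:ℕ∞) : WithTop ℕ∞) g) (n : ℕ) (ξ : E3) :
    iteratedFDeriv ℝ n (fun x => f x - g x) ξ
      = iteratedFDeriv ℝ n f ξ - iteratedFDeriv ℝ n g ξ := by
  have h1 : (fun x => f x - g x) = f + (-g) := by
    funext x; simp [sub_eq_add_neg]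
  rw [h1, iteratedFDeriv_add_apply (f := f) (g := -g) (hf.of_le (natCast_le_infty n)).contDiffAt
    (by exact (hg.neg.of_le (natCast_le_infty n)).contDiffAt), iteratedFDeriv_neg_apply, sub_eq_add_neg]


end VelocityAux

/-- Derivative estimate for the difference of group velocities: for every
`n ≥ 0` there is `C_n` such that `|∂_ξ^γ (ξ/⟨ξ⟩ − (ξ−η)/⟨ξ−η⟩)| ≤ C_n |η| / ⟨ξ⟩^{n+1}`
whenever `|η| ≤ |ξ|/2` and `|γ| = n`. -/
theorem velocity_difference_derivative_bounds (n : ℕ) :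
    ∃ C : ℝ, 0 < C ∧ ∀ ξ η : E3, ‖η‖ ≤ ‖ξ‖ / 2 →
      ‖iteratedFDeriv ℝ n (fun ζ => (jap ζ)⁻¹ • ζ - (jap (ζ - η))⁻¹ • (ζ - η)) ξ‖
        ≤ C * ‖η‖ / jap ξ ^ (n + 1 : ℝ) := by
  obtain ⟨C, hC, hB⟩ := gg_bound (n+1)
  refine ⟨C * 2^(n+1), by positivity, ?_⟩
  intro ξ η hη
  have htrans : ContDiff ℝ ((⊤:ℕ∞) : WithTop ℕ∞) (fun x : E3 => gg (x - η)) :=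
    contDiff_gg.comp (contDiff_id.sub contDiff_const)
  have hfn : (fun ζ => (jap ζ)⁻¹ • ζ - (jap (ζ - η))⁻¹ • (ζ - η))
      = fun ζ : E3 => gg ζ - gg (ζ - η) := rfl
  rw [hfn, iter_sub_apply contDiff_gg htrans n ξ, iter_translate gg contDiff_gg η n ξ]
  set K : ℝ := C * 2^(n+1) / jap ξ ^ (n+1 : ℕ) with hK
  have hseg : ∀ ζ ∈ segment ℝ (ξ - η) ξ, jap ξ ≤ 2 * jap ζ := by
    intro ζ hζ
    obtain ⟨a, b, ha, hb, hab, rfl⟩ := hζ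
    have hb' : b = 1 - a := by linarith
    subst hb'
    set ζ := a • (ξ - η) + (1 - a) • ξ with hζdef
    have hζξ : ξ - ζ = a • η := by rw [hζdef]; module
    have hn1 : ‖ξ - ζ‖ ≤ ‖η‖ := by
      rw [hζξ, norm_smul, Real.norm_of_nonneg ha]
      nlinarith [norm_nonneg η]
    have hlow : ‖ξ‖ / 2 ≤ ‖ζ‖ := by
      have h1 : ‖ξ‖ ≤ ‖ξ - ζ‖ + ‖ζ‖ := by
        calc ‖ξ‖ = ‖(ξ - ζ) + ζ‖ := by rw [sub_add_cancel]
        _ ≤ ‖ξ - ζ‖ + ‖ζ‖ := norm_add_le _ _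
      linarith [hη]
    have h4 : 1 + ‖ξ‖^2 ≤ 4 * (1 + ‖ζ‖^2) := by nlinarith [norm_nonneg ξ, norm_nonneg ζ]
    calc jap ξ ≤ Real.sqrt (4 * (1 + ‖ζ‖^2)) := Real.sqrt_le_sqrt h4
    _ = 2 * jap ζ := by
      rw [show (4:ℝ) * (1 + ‖ζ‖^2) = 2^2 * (1 + ‖ζ‖^2) by ring,
        Real.sqrt_mul (by positivity), Real.sqrt_sq (by norm_num)]
      rfl
  have hdiff : ∀ ζ ∈ segment ℝ (ξ - η) ξ, DifferentiableAt ℝ (iteratedFDeriv ℝ n gg) ζ :=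
    fun ζ _ => (contDiff_gg.differentiable_iteratedFDeriv (natCast_lt_infty n)) ζ
  have hbound : ∀ ζ ∈ segment ℝ (ξ - η) ξ, ‖fderiv ℝ (iteratedFDeriv ℝ n gg) ζ‖ ≤ K := by
    intro ζ hζ
    rw [norm_fderiv_iteratedFDeriv]
    refine (hB ζ).trans ?_
    have h2 := hseg ζ hζ
    have hzp : jap ζ ^ (-(((n+1):ℕ)):ℤ) = ((jap ζ)^((n+1):ℕ))⁻¹ := by
      rw [zpow_neg, zpow_natCast]
    rw [hzp]
    have hpow : jap ξ^((n+1):ℕ) ≤ 2^((n+1):ℕ) * jap ζ^((n+1):ℕ) := by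
      calc jap ξ^((n+1):ℕ) ≤ (2 * jap ζ)^((n+1):ℕ) :=
        pow_le_pow_left₀ (jap_pos ξ).le h2 _
      _ = 2^((n+1):ℕ) * jap ζ^((n+1):ℕ) := mul_pow _ _ _
    have h5 : ((jap ζ^((n+1):ℕ)):ℝ)⁻¹ ≤ 2^((n+1):ℕ) / jap ξ^((n+1):ℕ) := by
      rw [inv_eq_one_div, div_le_div_iff₀ (pow_pos (jap_pos ζ) _) (pow_pos (jap_pos ξ) _)]
      linarith [hpow]
    calc C * ((jap ζ)^((n+1):ℕ))⁻¹ ≤ C * (2^((n+1):ℕ) / jap ξ^((n+1):ℕ)) :=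
      mul_le_mul_of_nonneg_left h5 hC.le
    _ = K := by rw [hK]; ring
  have hmvt := (convex_segment (ξ - η) ξ).norm_image_sub_le_of_norm_fderiv_le hdiff hbound
    (left_mem_segment ℝ _ _) (right_mem_segment ℝ _ _)
  rw [sub_sub_cancel] at hmvt
  refine hmvt.trans ?_
  have hr : jap ξ ^ ((n:ℝ) + 1) = jap ξ ^ ((n+1):ℕ) := by
    rw [← Real.rpow_natCast (jap ξ) (n+1)]
    norm_num
  rw [hr, hK]
  exact le_of_eq (by ring)


end
end

section
/- Lower bound for the phase gradient: there is an absolute constant c > 0 such that for all η, σ ∈ ℝ³ and either choice of sign, | η/⟨η⟩ ± σ/⟨σ⟩ | ≥ c · | |η| − |σ| | / ( min(⟨η⟩,⟨σ⟩) · max(⟨η⟩,⟨σ⟩)² ). -/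
noncomputable section

open MeasureTheory Complex
open scoped ENNReal NNReal


open MeasureTheory Complex
open scoped ENNReal

/-- Lower bound for the phase gradient: there is an absolute `c > 0` such that
for all `η, σ ∈ ℝ³` and either sign,
`|η/⟨η⟩ ± σ/⟨σ⟩| ≥ c ||η|−|σ|| / (min(⟨η⟩,⟨σ⟩) max(⟨η⟩,⟨σ⟩)²)`. -/
theorem phase_gradient_lower_bound :
    ∃ c : ℝ, 0 < c ∧ ∀ θ : ℝ, (θ = 1 ∨ θ = -1) → ∀ η σ : E3,
      c * |‖η‖ - ‖σ‖| / (min (jap η) (jap σ) * max (jap η) (jap σ) ^ 2)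
        ≤ ‖(jap η)⁻¹ • η + θ • ((jap σ)⁻¹ • σ)‖ := by
  refine ⟨1, one_pos, ?_⟩
  intro θ hθ η σ
  set a := ‖η‖ with ha_def
  set b := ‖σ‖ with hb_def
  have ha0 : 0 ≤ a := norm_nonneg _
  have hb0 : 0 ≤ b := norm_nonneg _
  have hA2 : jap η ^ 2 = 1 + a ^ 2 := Real.sq_sqrt (by positivity)
  have hB2 : jap σ ^ 2 = 1 + b ^ 2 := Real.sq_sqrt (by positivity)
  have hA : 0 < jap η := Real.sqrt_pos.mpr (by positivity)
  have hB : 0 < jap σ := Real.sqrt_pos.mpr (by positivity)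
  set A := jap η with hA_def
  set B := jap σ with hB_def
  have hθ1 : |θ| = 1 := by rcases hθ with h | h <;> simp [h]
  -- Step 1: reverse triangle inequality
  have h1 : |a / A - b / B| ≤ ‖A⁻¹ • η + θ • (B⁻¹ • σ)‖ := by
    have htri := abs_norm_sub_norm_le (A⁻¹ • η) (-(θ • (B⁻¹ • σ)))
    simp only [sub_neg_eq_add, norm_neg] at htri
    have h2 : ‖A⁻¹ • η‖ = a / A := by
      rw [norm_smul, Real.norm_eq_abs, abs_inv, abs_of_pos hA, ← ha_def]; ring
    have h3 : ‖θ • B⁻¹ • σ‖ = b / B := by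
      rw [norm_smul, norm_smul, Real.norm_eq_abs, Real.norm_eq_abs, hθ1,
        abs_inv, abs_of_pos hB, ← hb_def]; ring
    rwa [h2, h3] at htri
  refine le_trans ?_ h1
  rw [one_mul]
  -- Step 2: real inequality
  set M := max A B with hM_def
  set m := min A B with hm_def
  have hM0 : 0 < M := lt_of_lt_of_le hA (le_max_left A B)
  have hm0 : 0 < m := lt_min hA hB
  have hmM : m * M = A * B := min_mul_max A B
  have hAM : A ≤ M := le_max_left A B
  have hBM : B ≤ M := le_max_right A B
  have hdiff : |a / A - b / B| = |a * B - b * A| / (A * B) := by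
    rw [div_sub_div _ _ (ne_of_gt hA) (ne_of_gt hB), abs_div,
      abs_of_pos (mul_pos hA hB)]
    ring_nf
  rw [hdiff, ← hmM, div_le_div_iff₀ (by positivity) (by positivity)]
  -- goal: |a - b| * (m * M) ≤ |a*B - b*A| * (m * M ^ 2)
  have key : |a - b| ≤ |a * B - b * A| * M := by
    rcases eq_or_lt_of_le (add_nonneg ha0 hb0) with h | hab
    · have ha' : a = 0 := by linarith
      have hb' : b = 0 := by linarith
      simp [ha', hb']
    · have hprod : (a * B - b * A) * (a * B + b * A) = (a - b) * (a + b) := by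
        linear_combination a ^ 2 * hB2 - b ^ 2 * hA2
      have hid : |a * B - b * A| * (a * B + b * A) = |a - b| * (a + b) := by
        calc |a * B - b * A| * (a * B + b * A)
            = |(a * B - b * A) * (a * B + b * A)| := by
              rw [abs_mul, _root_.abs_of_nonneg (show (0:ℝ) ≤ a * B + b * A by positivity)]
          _ = |(a - b) * (a + b)| := by rw [hprod]
          _ = |a - b| * (a + b) := by rw [abs_mul, abs_of_pos hab]
      have hle : a * B + b * A ≤ (a + b) * M := by nlinarith
      have hstep : |a - b| * (a + b) ≤ |a * B - b * A| * ((a + b) * M) :=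
        hid ▸ mul_le_mul_of_nonneg_left hle (abs_nonneg _)
      nlinarith [abs_nonneg (a - b), abs_nonneg (a * B - b * A)]
  nlinarith [mul_le_mul_of_nonneg_right key (le_of_lt (mul_pos hm0 hM0))]

end
end
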